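/- arXiv:math/9808082 — 2 statements merged into one kernel-verified Lean document; each statement's English description precedes it below -/
import Mathlib

section
/- For every (n, Fin k)-expression A, let F(A) := ⋃_{X ≤ A in M̂ₙ(Fin k)} G(X), with the subspace topology from 𝒞ₙ(k). Then the subspace G(A) ⊆ F(A) is a strong deformation retract of F(A) (there is a homotopy rel G(A) from the identity of F(A) to a retraction onto G(A)); in particular F(A) is a contractible space. -/
/-- Formal `(n, Fin k)`-expressions: binary trees whose leaves are labeled by
generators and whose internal nodes are labeled by one of the `n` operations.
Expressions are considered up to the strict associativity of each operation,
via the relation `W.equiv` below. -/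
inductive W (n k : ℕ) : Type
  | leaf : Fin k → W n k
  | node : Fin n → W n k → W n k → W n k

namespace W

variable {n k : ℕ}

/-- The list of leaf labels, from left to right. -/
def leaves : W n k → List (Fin k)
  | leaf a => [a]
  | node _ A B => A.leaves ++ B.leaves

/-- `A.Exact T`: the expression `A` uses each element of `T` exactly once and
no other generators. -/
def Exact (A : W n k) (T : Finset (Fin k)) : Prop :=
  A.leaves.Nodup ∧ A.leaves.toFinset = T

/-- `A.inRel a b i` means `a □ᵢ b` in `A`: the lowest common "ancestor" node of the
leaves `a` and `b` carries the operation `i`, with `a` to the left of `b`. -/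
def inRel : W n k → Fin k → Fin k → Fin n → Prop
  | leaf _, _, _, _ => False
  | node j A B, a, b, i => A.inRel a b i ∨ B.inRel a b i ∨ (j = i ∧ a ∈ A.leaves ∧ b ∈ B.leaves)

/-- The order relation of the poset `M̂ₙ`: `A ≤ B` iff whenever `a □ᵢ b` in `A`,
either `a □ⱼ b` in `B` for some `j ≥ i`, or `b □ⱼ a` in `B` for some `j > i`. -/
def le (A B : W n k) : Prop :=
  ∀ a b : Fin k, a ≠ b → ∀ i : Fin n, A.inRel a b i →
    ∃ j : Fin n, (i ≤ j ∧ B.inRel a b j) ∨ (i < j ∧ B.inRel b a j)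

/-- One step of the associativity/congruence relation on expressions. -/
inductive Step : W n k → W n k → Prop
  | assoc (i : Fin n) (A B C : W n k) :
      Step (node i (node i A B) C) (node i A (node i B C))
  | congr_left (i : Fin n) {A A' : W n k} (B : W n k) :
      Step A A' → Step (node i A B) (node i A' B)
  | congr_right (i : Fin n) (A : W n k) {B B' : W n k} :
      Step B B' → Step (node i A B) (node i A B')

/-- Equality of expressions (strict associativity of each operation). -/
def equiv (A B : W n k) : Prop := Relation.EqvGen Step A B

/-- Restriction of an expression to the leaves satisfying `p`
(`none` if no leaf survives). -/
def restrict : W n k → (Fin k → Bool) → Option (W n k)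
  | leaf a, p => if p a then some (leaf a) else none
  | node i A B, p =>
    match A.restrict p, B.restrict p with
    | some A', some B' => some (node i A' B')
    | some A', none => some A'
    | none, o => o

end W

/-- Joining two possibly-empty expressions by the operation `i`, with the convention
that the empty expression is a unit. -/
def onode {n k : ℕ} (i : Fin n) : Option (W n k) → Option (W n k) → Option (W n k)
  | some A, some B => some (W.node i A B)
  | some A, none => some A
  | none, o => o

/-- Equality of possibly-empty expressions. -/
def OEquiv {n k : ℕ} : Option (W n k) → Option (W n k) → Prop
  | none, none => True
  | some A, some B => A.equiv B
  | _, _ => False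

/-- `A − T`: the expression `A` with the leaves belonging to `T` deleted. -/
def diffR {n k : ℕ} (A : W n k) (T : Finset (Fin k)) : Option (W n k) :=
  A.restrict fun a => decide (a ∉ T)

/-- The open box (interior) of the `a`-th little `n`-cube of a pair `c = (u, v)`. -/
def cubeInterior (n k : ℕ) (c : (Fin k → Fin n → ℝ) × (Fin k → Fin n → ℝ)) (a : Fin k) :
    Set (Fin n → ℝ) :=
  Set.univ.pi fun i => Set.Ioo (c.1 a i) (c.2 a i)

/-- `c = (u, v)` is a configuration of `k` little `n`-cubes. -/
def IsConfig (n k : ℕ) (c : (Fin k → Fin n → ℝ) × (Fin k → Fin n → ℝ)) : Prop :=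
  (∀ a i, 0 ≤ c.1 a i ∧ c.1 a i < c.2 a i ∧ c.2 a i ≤ 1) ∧
  ∀ a b : Fin k, a ≠ b → Disjoint (cubeInterior n k c a) (cubeInterior n k c b)

/-- `G(A)`: the configurations whose cubes are separated as prescribed by the
expression `A`. -/
def Gset (n k : ℕ) (A : W n k) : Set ((Fin k → Fin n → ℝ) × (Fin k → Fin n → ℝ)) :=
  {c | IsConfig n k c ∧ ∀ a b i, A.inRel a b i → c.2 a i ≤ c.1 b i}

/-- `F(A) = ⋃_{X ≤ A} G(X)`, the union over all expressions `X` on the full set of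
generators mapping into `A` in the poset `M̂ₙ(Fin k)`. -/
def Fset (n k : ℕ) (A : W n k) : Set ((Fin k → Fin n → ℝ) × (Fin k → Fin n → ℝ)) :=
  ⋃ (X : W n k) (_ : X.Exact Finset.univ ∧ X.le A), Gset n k X


/-!
The deformation follows the tree of `A`. At a node `L □ⱼ R`, during the first half of the time
the cubes of `L` are shrunk, in direction `j`, by a homothety towards the bottom of the bounding
box of all cubes of the node, and the cubes of `R` by one towards its top, until the hyperplane
`xⱼ = m` halfway between the top of `L` and the bottom of `R` separates them; during the second
half the same is done recursively inside `L` and inside `R`, which keeps every cube inside the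
bounding box of its group, so `m` keeps separating `L` from `R`.

If `c ∈ G(X)` with `X ≤ A`, then `X` never puts an `R`-cube before an `L`-cube in direction `j`,
so the push preserves `c ∈ G(X)`; once it is complete, `c` lies in `G(X|L □ⱼ X|R)` with
`X|L ≤ L` and `X|R ≤ R`, and induction applies. Hence the deformation stays in `F(A)` and ends
in `G(A)`, and it fixes `G(A)`, where the top of `L` is already below the bottom of `R`. Finally
`G(A)` is convex, so `F(A)`, which deforms into it, is contractible.
-/

theorem ContractibleSpace.of_homotopic_id_comp {X Y : Type*} [TopologicalSpace X]
    [TopologicalSpace Y] [ContractibleSpace Y] (f : C(X, Y)) (g : C(Y, X))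
    (h : (ContinuousMap.id X).Homotopic (g.comp f)) : ContractibleSpace X := by
  obtain ⟨x, hx⟩ := ((id_nullhomotopic Y).comp_left f).comp_right g
  exact (contractible_iff_id_nullhomotopic X).2 ⟨x, h.trans hx⟩

def stretch (p σ x : ℝ) : ℝ := p + σ * (x - p)

section Stretch

variable {p σ x : ℝ}

theorem stretch_one (p x : ℝ) : stretch p 1 x = x := by simp [stretch]

theorem stretch_div {y : ℝ} (hy : y ≠ p) (z : ℝ) : stretch p ((z - p) / (y - p)) y = z := by
  rw [stretch, div_mul_cancel₀ _ (sub_ne_zero.2 hy)]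
  ring

theorem stretch_strictMono (hσ : 0 < σ) : StrictMono (stretch p σ) := fun x y h => by
  simp only [stretch]
  nlinarith

theorem stretch_mem_Icc_of_le (hσ₀ : 0 ≤ σ) (hσ₁ : σ ≤ 1) (hx : p ≤ x) :
    stretch p σ x ∈ Set.Icc p x := by
  constructor <;> simp only [stretch] <;> nlinarith

theorem stretch_mem_Icc_of_ge (hσ₀ : 0 ≤ σ) (hσ₁ : σ ≤ 1) (hx : x ≤ p) :
    stretch p σ x ∈ Set.Icc x p := by
  constructor <;> simp only [stretch] <;> nlinarith

end Stretch

theorem min_le_convex_comb {x y s : ℝ} (hs : s ∈ Set.Icc 0 1) :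
    min x y ≤ (1 - s) * x + s * y := by
  nlinarith [mul_le_mul_of_nonneg_left (min_le_left x y) (sub_nonneg.2 hs.2),
    mul_le_mul_of_nonneg_left (min_le_right x y) hs.1]

theorem convex_comb_le_max {x y s : ℝ} (hs : s ∈ Set.Icc 0 1) :
    (1 - s) * x + s * y ≤ max x y := by
  nlinarith [mul_le_mul_of_nonneg_left (le_max_left x y) (sub_nonneg.2 hs.2),
    mul_le_mul_of_nonneg_left (le_max_right x y) hs.1]

abbrev Cfg (n k : ℕ) := (Fin k → Fin n → ℝ) × (Fin k → Fin n → ℝ)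

def IsNondegenerate {n k : ℕ} (c : Cfg n k) : Prop := ∀ a i, c.1 a i < c.2 a i

def InUnitCube {n k : ℕ} (c : Cfg n k) : Prop :=
  ∀ a i, 0 ≤ c.1 a i ∧ c.1 a i < c.2 a i ∧ c.2 a i ≤ 1

namespace W

variable {n k : ℕ}

theorem exists_mem_leaves (A : W n k) : ∃ a, a ∈ A.leaves := by
  induction A with
  | leaf a => exact ⟨a, List.mem_singleton_self a⟩
  | node _ L _ ihL _ =>
    obtain ⟨a, ha⟩ := ihL
    exact ⟨a, List.mem_append_left _ ha⟩

theorem mem_leaves_of_inRel {A : W n k} {a b : Fin k} {i : Fin n} (h : A.inRel a b i) :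
    a ∈ A.leaves ∧ b ∈ A.leaves := by
  induction A with
  | leaf _ => exact h.elim
  | node j L R ihL ihR =>
    simp only [leaves, List.mem_append]
    rcases h with h | h | ⟨-, ha, hb⟩
    · exact ⟨.inl (ihL h).1, .inl (ihL h).2⟩
    · exact ⟨.inr (ihR h).1, .inr (ihR h).2⟩
    · exact ⟨.inl ha, .inr hb⟩

theorem exists_inRel_or_inRel {A : W n k} {a b : Fin k} (ha : a ∈ A.leaves)
    (hb : b ∈ A.leaves) (hab : a ≠ b) : ∃ i, A.inRel a b i ∨ A.inRel b a i := by
  induction A with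
  | leaf c =>
    simp only [leaves, List.mem_singleton] at ha hb
    exact absurd (ha.trans hb.symm) hab
  | node j L R ihL ihR =>
    rcases List.mem_append.1 ha with ha | ha <;> rcases List.mem_append.1 hb with hb | hb
    · exact (ihL ha hb).imp fun _ => Or.imp .inl .inl
    · exact ⟨j, .inl (.inr (.inr ⟨rfl, ha, hb⟩))⟩
    · exact ⟨j, .inr (.inr (.inr ⟨rfl, hb, ha⟩))⟩
    · exact (ihR ha hb).imp fun _ => Or.imp (.inr ∘ .inl) (.inr ∘ .inl)

theorem le_refl (A : W n k) : A.le A := fun _ _ _ i h => ⟨i, .inl ⟨_root_.le_refl i, h⟩⟩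

section Node

variable {j : Fin n} {L R : W n k}

theorem notMem_right_of_mem_left (hnd : (node j L R).leaves.Nodup) {a : Fin k}
    (ha : a ∈ L.leaves) : a ∉ R.leaves :=
  List.disjoint_of_nodup_append hnd ha

theorem inRel_left_of_inRel_node (hnd : (node j L R).leaves.Nodup) {a b : Fin k}
    {i : Fin n} (ha : a ∈ L.leaves) (hb : b ∈ L.leaves) (h : (node j L R).inRel a b i) :
    L.inRel a b i := by
  rcases h with h | h | ⟨-, -, hb'⟩
  · exact h
  · exact absurd (mem_leaves_of_inRel h).1 (notMem_right_of_mem_left hnd ha)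
  · exact absurd hb' (notMem_right_of_mem_left hnd hb)

theorem inRel_right_of_inRel_node (hnd : (node j L R).leaves.Nodup) {a b : Fin k}
    {i : Fin n} (ha : a ∈ R.leaves) (h : (node j L R).inRel a b i) : R.inRel a b i := by
  rcases h with h | h | ⟨-, ha', -⟩
  · exact absurd (mem_leaves_of_inRel h).1 (notMem_right_of_mem_left hnd · ha)
  · exact h
  · exact absurd ha (notMem_right_of_mem_left hnd ha')

theorem not_inRel_of_le_node (hnd : (node j L R).leaves.Nodup) {X : W n k}
    (hX : X.le (node j L R)) {a b : Fin k} (ha : a ∈ R.leaves) (hb : b ∈ L.leaves) :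
    ¬ X.inRel a b j := by
  intro h
  have hab : a ≠ b := fun e => notMem_right_of_mem_left hnd hb (e ▸ ha)
  obtain ⟨i, ⟨-, hi⟩ | ⟨hji, hi⟩⟩ := hX a b hab j h
  · rcases hi with hi | hi | ⟨-, ha', -⟩
    · exact notMem_right_of_mem_left hnd (mem_leaves_of_inRel hi).1 ha
    · exact notMem_right_of_mem_left hnd hb (mem_leaves_of_inRel hi).2
    · exact notMem_right_of_mem_left hnd ha' ha
  · rcases hi with hi | hi | ⟨rfl, -, -⟩
    · exact notMem_right_of_mem_left hnd (mem_leaves_of_inRel hi).2 ha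
    · exact notMem_right_of_mem_left hnd hb (mem_leaves_of_inRel hi).1
    · exact lt_irrefl _ hji

end Node

theorem restrict_node (i : Fin n) (A B : W n k) (p : Fin k → Bool) :
    (node i A B).restrict p = onode i (A.restrict p) (B.restrict p) := by
  simp only [restrict]
  cases A.restrict p <;> cases B.restrict p <;> rfl

theorem leaves_restrict (X : W n k) (p : Fin k → Bool) :
    (X.restrict p).elim [] leaves = X.leaves.filter p := by
  induction X with
  | leaf a => cases h : p a <;> simp [restrict, leaves, h]
  | node i A B ihA ihB =>
    rw [restrict_node, leaves, List.filter_append, ← ihA, ← ihB]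
    cases A.restrict p <;> cases B.restrict p <;> simp [onode, leaves]

theorem leaves_eq_filter_of_restrict {X X' : W n k} {p : Fin k → Bool}
    (h : X.restrict p = some X') : X'.leaves = X.leaves.filter p := by
  simpa [h] using leaves_restrict X p

theorem inRel_of_restrict {X X' : W n k} {p : Fin k → Bool} (h : X.restrict p = some X')
    {a b : Fin k} {i : Fin n} (hr : X'.inRel a b i) : X.inRel a b i := by
  induction X generalizing X' with
  | leaf c =>
    by_cases hc : p c <;> simp only [restrict, hc] at h <;> cases h
    exact hr.elim
  | node j A B ihA ihB =>
    have mem {Y Y' : W n k} (hY : Y.restrict p = some Y') {e : Fin k} (he : e ∈ Y'.leaves) :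
        e ∈ Y.leaves := (List.mem_filter.1 (leaves_eq_filter_of_restrict hY ▸ he)).1
    rw [restrict_node] at h
    cases hA : A.restrict p <;> cases hB : B.restrict p <;> simp only [onode, hA, hB] at h <;>
      cases h
    · exact .inr (.inl (ihB hB hr))
    · exact .inl (ihA hA hr)
    · rcases hr with hr | hr | ⟨rfl, ha, hb⟩
      · exact .inl (ihA hA hr)
      · exact .inr (.inl (ihB hB hr))
      · exact .inr (.inr ⟨rfl, mem hA ha, mem hB hb⟩)

theorem Exact.mem_iff {X B : W n k} (h : X.Exact B.leaves.toFinset) {a : Fin k} :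
    a ∈ X.leaves ↔ a ∈ B.leaves := by
  rw [← List.mem_toFinset, h.2, List.mem_toFinset]

theorem exists_restrict_le {X A B : W n k} (hX : X.Exact A.leaves.toFinset) (hXA : X.le A)
    (hBA : ∀ a ∈ B.leaves, a ∈ A.leaves)
    (hAB : ∀ a b i, a ∈ B.leaves → b ∈ B.leaves → A.inRel a b i → B.inRel a b i) :
    ∃ Y : W n k, Y.Exact B.leaves.toFinset ∧ Y.le B ∧
      ∀ a b i, Y.inRel a b i → X.inRel a b i := by
  set p : Fin k → Bool := fun a => decide (a ∈ B.leaves)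
  obtain ⟨Y, hY⟩ : ∃ Y, X.restrict p = some Y := by
    obtain ⟨b, hb⟩ := B.exists_mem_leaves
    have hne : X.leaves.filter p ≠ [] :=
      List.ne_nil_of_mem (List.mem_filter.2 ⟨hX.mem_iff.2 (hBA b hb), decide_eq_true hb⟩)
    rw [← leaves_restrict] at hne
    cases h : X.restrict p with
    | none => simp [h] at hne
    | some Y => exact ⟨Y, rfl⟩
  have hmem : ∀ a, a ∈ Y.leaves ↔ a ∈ B.leaves := fun a => by
    rw [leaves_eq_filter_of_restrict hY, List.mem_filter, hX.mem_iff, decide_eq_true_iff]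
    exact ⟨And.right, fun h => ⟨hBA a h, h⟩⟩
  refine ⟨Y, ⟨leaves_eq_filter_of_restrict hY ▸ hX.1.filter _, by ext; simp [hmem]⟩,
    fun a b hab i h => ?_, fun a b i => inRel_of_restrict hY⟩
  have ha := (hmem a).1 (mem_leaves_of_inRel h).1
  have hb := (hmem b).1 (mem_leaves_of_inRel h).2
  obtain ⟨j, hj⟩ := hXA a b hab i (inRel_of_restrict hY h)
  exact ⟨j, hj.imp (And.imp_right (hAB a b j ha hb)) (And.imp_right (hAB b a j hb ha))⟩

theorem node_le_node {j : Fin n} {X Y L R : W n k} (hXL : X.le L) (hYR : Y.le R)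
    (hX : ∀ a ∈ X.leaves, a ∈ L.leaves) (hY : ∀ a ∈ Y.leaves, a ∈ R.leaves) :
    (node j X Y).le (node j L R) := by
  intro a b hab i h
  rcases h with h | h | ⟨rfl, ha, hb⟩
  · exact (hXL a b hab i h).imp fun _ => Or.imp (And.imp_right .inl) (And.imp_right .inl)
  · exact (hYR a b hab i h).imp fun _ =>
      Or.imp (And.imp_right (.inr ∘ .inl)) (And.imp_right (.inr ∘ .inl))
  · exact ⟨j, .inl ⟨_root_.le_refl j, .inr (.inr ⟨rfl, hX a ha, hY b hb⟩)⟩⟩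

theorem Exact.node {j : Fin n} {X Y L R : W n k} (hnd : (node j L R).leaves.Nodup)
    (hX : X.Exact L.leaves.toFinset) (hY : Y.Exact R.leaves.toFinset) :
    (node j X Y).Exact (node j L R).leaves.toFinset := by
  refine ⟨hX.1.append hY.1 fun a haX haY => ?_, ?_⟩
  · exact notMem_right_of_mem_left hnd (hX.mem_iff.1 haX) (hY.mem_iff.1 haY)
  · simp only [leaves, List.toFinset_append, hX.2, hY.2]

def Separates (X : W n k) (c : Cfg n k) : Prop := ∀ a b i, X.inRel a b i → c.2 a i ≤ c.1 b i

/-- For `A` on all generators, `F(A)` consists of the configurations separated below `A`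
(`mem_Fset_iff`). -/
def SeparatedBelow (A : W n k) (c : Cfg n k) : Prop :=
  ∃ X : W n k, X.Exact A.leaves.toFinset ∧ X.le A ∧ X.Separates c

theorem leaves_toFinset_nonempty (A : W n k) : A.leaves.toFinset.Nonempty :=
  let ⟨a, ha⟩ := A.exists_mem_leaves
  ⟨a, List.mem_toFinset.2 ha⟩

noncomputable def low (A : W n k) (c : Cfg n k) (i : Fin n) : ℝ :=
  A.leaves.toFinset.inf' A.leaves_toFinset_nonempty fun a => c.1 a i

noncomputable def high (A : W n k) (c : Cfg n k) (i : Fin n) : ℝ :=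
  A.leaves.toFinset.sup' A.leaves_toFinset_nonempty fun a => c.2 a i

section Hull

variable {A : W n k} {c : Cfg n k} {i : Fin n} {a : Fin k} {x : ℝ}

theorem low_le (ha : a ∈ A.leaves) : A.low c i ≤ c.1 a i :=
  Finset.inf'_le _ (List.mem_toFinset.2 ha)

theorem le_low (h : ∀ a ∈ A.leaves, x ≤ c.1 a i) : x ≤ A.low c i :=
  Finset.le_inf' _ _ fun a ha => h a (List.mem_toFinset.1 ha)

theorem le_high (ha : a ∈ A.leaves) : c.2 a i ≤ A.high c i :=
  Finset.le_sup' (fun a => c.2 a i) (List.mem_toFinset.2 ha)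

theorem high_le (h : ∀ a ∈ A.leaves, c.2 a i ≤ x) : A.high c i ≤ x :=
  Finset.sup'_le _ _ fun a ha => h a (List.mem_toFinset.1 ha)

end Hull

@[fun_prop]
theorem continuous_low (A : W n k) (i : Fin n) : Continuous fun c : Cfg n k => A.low c i :=
  Continuous.finset_inf'_apply _ fun _ _ => by fun_prop

@[fun_prop]
theorem continuous_high (A : W n k) (i : Fin n) : Continuous fun c : Cfg n k => A.high c i :=
  Continuous.finset_sup'_apply _ fun _ _ => by fun_prop

def glue (L : W n k) (d e : Cfg n k) : Cfg n k :=
  (fun a => if a ∈ L.leaves then d.1 a else e.1 a,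
    fun a => if a ∈ L.leaves then d.2 a else e.2 a)

section Glue

variable {L : W n k} {d e : Cfg n k} {a : Fin k}

theorem glue_fst_of_mem (ha : a ∈ L.leaves) : (L.glue d e).1 a = d.1 a := if_pos ha
theorem glue_snd_of_mem (ha : a ∈ L.leaves) : (L.glue d e).2 a = d.2 a := if_pos ha
theorem glue_fst_of_notMem (ha : a ∉ L.leaves) : (L.glue d e).1 a = e.1 a := if_neg ha
theorem glue_snd_of_notMem (ha : a ∉ L.leaves) : (L.glue d e).2 a = e.2 a := if_neg ha

theorem glue_self (L : W n k) (d : Cfg n k) : L.glue d d = d := by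
  simp [glue]

theorem continuous_glue (L : W n k) : Continuous fun p : Cfg n k × Cfg n k => L.glue p.1 p.2 := by
  refine .prodMk (continuous_pi fun a => ?_) (continuous_pi fun a => ?_) <;>
    exact .if_const _ (by fun_prop) (by fun_prop)

theorem isNondegenerate_glue (hd : IsNondegenerate d) (he : IsNondegenerate e) :
    IsNondegenerate (L.glue d e) := fun a i => by
  by_cases ha : a ∈ L.leaves
  · rw [glue_fst_of_mem ha, glue_snd_of_mem ha]
    exact hd a i
  · rw [glue_fst_of_notMem ha, glue_snd_of_notMem ha]
    exact he a i

end Glue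

section Separation

variable {j : Fin n} {L R : W n k}

theorem SeparatedBelow.left {c : Cfg n k} (h : (node j L R).SeparatedBelow c)
    (hnd : (node j L R).leaves.Nodup) : L.SeparatedBelow c := by
  obtain ⟨X, hX, hXA, hXc⟩ := h
  obtain ⟨Y, hY, hYL, hYX⟩ := exists_restrict_le hX hXA (fun _ => List.mem_append_left _)
    fun _ _ _ ha hb => inRel_left_of_inRel_node hnd ha hb
  exact ⟨Y, hY, hYL, fun a b i h => hXc a b i (hYX a b i h)⟩

theorem SeparatedBelow.right {c : Cfg n k} (h : (node j L R).SeparatedBelow c)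
    (hnd : (node j L R).leaves.Nodup) : R.SeparatedBelow c := by
  obtain ⟨X, hX, hXA, hXc⟩ := h
  obtain ⟨Y, hY, hYR, hYX⟩ := exists_restrict_le hX hXA (fun _ => List.mem_append_right _)
    fun _ _ _ ha _ => inRel_right_of_inRel_node hnd ha
  exact ⟨Y, hY, hYR, fun a b i h => hXc a b i (hYX a b i h)⟩

theorem Separates.node_glue {X Y : W n k} {d e : Cfg n k} (hX : ∀ a ∈ X.leaves, a ∈ L.leaves)
    (hY : ∀ a ∈ Y.leaves, a ∉ L.leaves) (hXd : X.Separates d) (hYe : Y.Separates e)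
    (hXY : ∀ a ∈ X.leaves, ∀ b ∈ Y.leaves, d.2 a j ≤ e.1 b j) :
    (node j X Y).Separates (L.glue d e) := by
  rintro a b i (h | h | ⟨rfl, ha, hb⟩)
  · obtain ⟨ha, hb⟩ := mem_leaves_of_inRel h
    rw [glue_snd_of_mem (hX a ha), glue_fst_of_mem (hX b hb)]
    exact hXd a b i h
  · obtain ⟨ha, hb⟩ := mem_leaves_of_inRel h
    rw [glue_snd_of_notMem (hY a ha), glue_fst_of_notMem (hY b hb)]
    exact hYe a b i h
  · rw [glue_snd_of_mem (hX a ha), glue_fst_of_notMem (hY b hb)]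
    exact hXY a ha b hb

theorem SeparatedBelow.node_glue {d e : Cfg n k} (hnd : (node j L R).leaves.Nodup)
    (hL : L.SeparatedBelow d) (hR : R.SeparatedBelow e)
    (hLR : ∀ a ∈ L.leaves, ∀ b ∈ R.leaves, d.2 a j ≤ e.1 b j) :
    (node j L R).SeparatedBelow (L.glue d e) := by
  obtain ⟨X, hX, hXL, hXd⟩ := hL
  obtain ⟨Y, hY, hYR, hYe⟩ := hR
  refine ⟨node j X Y, hX.node hnd hY,
    node_le_node hXL hYR (fun _ => hX.mem_iff.1) (fun _ => hY.mem_iff.1), ?_⟩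
  exact hXd.node_glue (fun _ => hX.mem_iff.1)
    (fun _ ha haL => notMem_right_of_mem_left hnd haL (hY.mem_iff.1 ha)) hYe
    fun a ha b hb => hLR a (hX.mem_iff.1 ha) b (hY.mem_iff.1 hb)

end Separation

section Push

variable (j : Fin n) (L R : W n k) (s : ℝ) (c : Cfg n k)

noncomputable def pushMid : ℝ := (L.high c j + R.low c j) / 2

/-- The ratio of the homothety centred at the bottom of all cubes that moves the top of the
`L`-cubes, in direction `j`, a fraction `s` of the way down to `pushMid` (if it is above). -/
noncomputable def pushRatioLeft : ℝ :=
  (min (L.high c j) ((1 - s) * L.high c j + s * pushMid j L R c) - (node j L R).low c j) /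
    (L.high c j - (node j L R).low c j)

noncomputable def pushRatioRight : ℝ :=
  (max (R.low c j) ((1 - s) * R.low c j + s * pushMid j L R c) - (node j L R).high c j) /
    (R.low c j - (node j L R).high c j)

noncomputable def pushCoord (a : Fin k) (x : ℝ) : ℝ :=
  if a ∈ L.leaves then stretch ((node j L R).low c j) (pushRatioLeft j L R s c) x
  else if a ∈ R.leaves then stretch ((node j L R).high c j) (pushRatioRight j L R s c) x
  else x

noncomputable def push : Cfg n k :=
  (fun a i => if i = j then pushCoord j L R s c a (c.1 a i) else c.1 a i,
    fun a i => if i = j then pushCoord j L R s c a (c.2 a i) else c.2 a i)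

end Push

section PushLemmas

variable {j : Fin n} {L R : W n k} {s : ℝ} {c : Cfg n k} {a : Fin k} {i : Fin n}

theorem push_fst_of_ne (hi : i ≠ j) : (push j L R s c).1 a i = c.1 a i := if_neg hi
theorem push_snd_of_ne (hi : i ≠ j) : (push j L R s c).2 a i = c.2 a i := if_neg hi
theorem push_fst_self : (push j L R s c).1 a j = pushCoord j L R s c a (c.1 a j) := if_pos rfl
theorem push_snd_self : (push j L R s c).2 a j = pushCoord j L R s c a (c.2 a j) := if_pos rfl

theorem pushCoord_of_mem_left (ha : a ∈ L.leaves) :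
    pushCoord j L R s c a = stretch ((node j L R).low c j) (pushRatioLeft j L R s c) :=
  funext fun _ => if_pos ha

theorem pushCoord_of_mem_right (haL : a ∉ L.leaves) (ha : a ∈ R.leaves) :
    pushCoord j L R s c a = stretch ((node j L R).high c j) (pushRatioRight j L R s c) :=
  funext fun _ => by simp only [pushCoord, if_neg haL, if_pos ha]

theorem low_node_le_low_right : (node j L R).low c j ≤ R.low c j :=
  le_low fun _ hb => low_le (List.mem_append_right _ hb)

theorem high_left_le_high_node : L.high c j ≤ (node j L R).high c j :=
  high_le fun _ ha => le_high (List.mem_append_left _ ha)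

theorem low_node_lt_high_left (hc : IsNondegenerate c) : (node j L R).low c j < L.high c j :=
  let ⟨_, ha⟩ := L.exists_mem_leaves
  ((low_le (List.mem_append_left _ ha)).trans_lt (hc _ j)).trans_le (le_high ha)

theorem low_right_lt_high_node (hc : IsNondegenerate c) : R.low c j < (node j L R).high c j :=
  let ⟨_, hb⟩ := R.exists_mem_leaves
  ((low_le hb).trans_lt (hc _ j)).trans_le (le_high (List.mem_append_right _ hb))

theorem pushRatioLeft_pos (hc : IsNondegenerate c) (hs : s ∈ Set.Icc 0 1) :
    0 < pushRatioLeft j L R s c := by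
  have hQ := low_node_lt_high_left (j := j) (L := L) (R := R) hc
  have hP := low_node_le_low_right (j := j) (L := L) (R := R) (c := c)
  have hM : (node j L R).low c j < pushMid j L R c := by rw [pushMid]; linarith
  exact div_pos (sub_pos.2 (lt_min hQ ((lt_min hQ hM).trans_le (min_le_convex_comb hs))))
    (sub_pos.2 hQ)

theorem pushRatioLeft_le_one (hc : IsNondegenerate c) : pushRatioLeft j L R s c ≤ 1 :=
  (div_le_one (sub_pos.2 (low_node_lt_high_left hc))).2 (by gcongr; exact min_le_left _ _)

theorem pushRatioRight_pos (hc : IsNondegenerate c) (hs : s ∈ Set.Icc 0 1) :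
    0 < pushRatioRight j L R s c := by
  have hP := low_right_lt_high_node (j := j) (L := L) (R := R) hc
  have hQ := high_left_le_high_node (j := j) (L := L) (R := R) (c := c)
  have hM : pushMid j L R c < (node j L R).high c j := by rw [pushMid]; linarith
  exact div_pos_of_neg_of_neg
    (sub_neg.2 (max_lt hP ((convex_comb_le_max hs).trans_lt (max_lt hP hM)))) (sub_neg.2 hP)

theorem pushRatioRight_le_one (hc : IsNondegenerate c) : pushRatioRight j L R s c ≤ 1 :=
  (div_le_one_of_neg (sub_neg.2 (low_right_lt_high_node hc))).2 (by gcongr; exact le_max_left _ _)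

theorem strictMono_pushCoord (hc : IsNondegenerate c) (hs : s ∈ Set.Icc 0 1) (a : Fin k) :
    StrictMono (pushCoord j L R s c a) := by
  unfold pushCoord
  split_ifs
  · exact stretch_strictMono (pushRatioLeft_pos hc hs)
  · exact stretch_strictMono (pushRatioRight_pos hc hs)
  · exact strictMono_id

theorem pushCoord_mem_Icc_of_mem_left (hc : IsNondegenerate c) (hs : s ∈ Set.Icc 0 1)
    (ha : a ∈ L.leaves) {x : ℝ} (hx : (node j L R).low c j ≤ x) :
    pushCoord j L R s c a x ∈ Set.Icc ((node j L R).low c j) x := by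
  rw [pushCoord_of_mem_left ha]
  exact stretch_mem_Icc_of_le (pushRatioLeft_pos hc hs).le (pushRatioLeft_le_one hc) hx

theorem pushCoord_mem_Icc_of_notMem_left (hc : IsNondegenerate c) (hs : s ∈ Set.Icc 0 1)
    (ha : a ∉ L.leaves) {x : ℝ} (hx : x ≤ (node j L R).high c j) :
    pushCoord j L R s c a x ∈ Set.Icc x ((node j L R).high c j) := by
  by_cases haR : a ∈ R.leaves
  · rw [pushCoord_of_mem_right ha haR]
    exact stretch_mem_Icc_of_ge (pushRatioRight_pos hc hs).le (pushRatioRight_le_one hc) hx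
  · simpa [pushCoord, ha, haR] using hx

theorem push_eq_self (hc : IsNondegenerate c)
    (hL : L.high c j ≤ (1 - s) * L.high c j + s * pushMid j L R c)
    (hR : (1 - s) * R.low c j + s * pushMid j L R c ≤ R.low c j) : push j L R s c = c := by
  have hσL : pushRatioLeft j L R s c = 1 := by
    rw [pushRatioLeft, min_eq_left hL, div_self (sub_pos.2 (low_node_lt_high_left hc)).ne']
  have hσR : pushRatioRight j L R s c = 1 := by
    rw [pushRatioRight, max_eq_left hR, div_self (sub_neg.2 (low_right_lt_high_node hc)).ne]
  ext a i <;> simp [push, pushCoord, hσL, hσR, stretch_one]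

theorem push_zero (hc : IsNondegenerate c) : push j L R 0 c = c :=
  push_eq_self hc (by simp) (by simp)

theorem push_of_separates (hc : IsNondegenerate c) (hsep : (node j L R).Separates c)
    (hs : 0 ≤ s) : push j L R s c = c := by
  have hQP : L.high c j ≤ R.low c j :=
    high_le fun a ha => le_low fun b hb => hsep a b j (.inr (.inr ⟨rfl, ha, hb⟩))
  have hM : L.high c j ≤ pushMid j L R c ∧ pushMid j L R c ≤ R.low c j := by
    constructor <;> rw [pushMid] <;> linarith
  exact push_eq_self hc (by nlinarith [hM.1]) (by nlinarith [hM.2])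

theorem high_left_push_one_le (hc : IsNondegenerate c) :
    L.high (push j L R 1 c) j ≤ pushMid j L R c := high_le fun a ha => by
  rw [push_snd_self, pushCoord_of_mem_left ha]
  calc stretch _ (pushRatioLeft j L R 1 c) (c.2 a j)
      ≤ stretch _ (pushRatioLeft j L R 1 c) (L.high c j) :=
        (stretch_strictMono (pushRatioLeft_pos hc ⟨zero_le_one, le_rfl⟩)).monotone (le_high ha)
    _ = min (L.high c j) (pushMid j L R c) := by
        rw [pushRatioLeft, stretch_div (low_node_lt_high_left hc).ne']
        simp
    _ ≤ pushMid j L R c := min_le_right _ _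

theorem pushMid_le_low_right_push_one (hc : IsNondegenerate c)
    (hnd : (node j L R).leaves.Nodup) : pushMid j L R c ≤ R.low (push j L R 1 c) j :=
  le_low fun b hb => by
    rw [push_fst_self, pushCoord_of_mem_right (notMem_right_of_mem_left hnd · hb) hb]
    calc pushMid j L R c
        ≤ max (R.low c j) (pushMid j L R c) := le_max_right _ _
      _ = stretch _ (pushRatioRight j L R 1 c) (R.low c j) := by
        rw [pushRatioRight, stretch_div (low_right_lt_high_node hc).ne]
        simp
      _ ≤ stretch _ (pushRatioRight j L R 1 c) (c.1 b j) :=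
        (stretch_strictMono (pushRatioRight_pos hc ⟨zero_le_one, le_rfl⟩)).monotone (low_le hb)

end PushLemmas

section PushInvariants

variable {j : Fin n} {L R : W n k} {s : ℝ} {c : Cfg n k}

theorem isNondegenerate_push (hc : IsNondegenerate c) (hs : s ∈ Set.Icc 0 1) :
    IsNondegenerate (push j L R s c) := by
  intro a i
  rcases eq_or_ne i j with rfl | hi
  · rw [push_fst_self, push_snd_self]
    exact strictMono_pushCoord hc hs a (hc a i)
  · rw [push_fst_of_ne hi, push_snd_of_ne hi]
    exact hc a i

theorem push_mem_hull (hc : IsNondegenerate c) (hs : s ∈ Set.Icc 0 1) {a : Fin k}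
    (ha : a ∈ (node j L R).leaves) (i : Fin n) :
    (node j L R).low c i ≤ (push j L R s c).1 a i ∧
      (push j L R s c).2 a i ≤ (node j L R).high c i := by
  rcases eq_or_ne i j with rfl | hi
  · rw [push_fst_self, push_snd_self]
    by_cases haL : a ∈ L.leaves
    · exact ⟨(pushCoord_mem_Icc_of_mem_left hc hs haL (low_le ha)).1,
        (pushCoord_mem_Icc_of_mem_left hc hs haL ((low_le ha).trans (hc a i).le)).2.trans
          (le_high ha)⟩
    · exact ⟨(low_le ha).trans
          (pushCoord_mem_Icc_of_notMem_left hc hs haL ((hc a i).le.trans (le_high ha))).1,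
        (pushCoord_mem_Icc_of_notMem_left hc hs haL (le_high ha)).2⟩
  · rw [push_fst_of_ne hi, push_snd_of_ne hi]
    exact ⟨low_le ha, le_high ha⟩

/-- In direction `j` the push moves `L`-cubes only down and `R`-cubes only up. -/
theorem Separates.push (hnd : (node j L R).leaves.Nodup) {X : W n k} (hXA : X.le (node j L R))
    (hX : ∀ a ∈ X.leaves, a ∈ (node j L R).leaves) (hXc : X.Separates c)
    (hc : IsNondegenerate c) (hs : s ∈ Set.Icc 0 1) : X.Separates (push j L R s c) := by
  intro a b i h
  have hab := hXc a b i h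
  rcases eq_or_ne i j with rfl | hi
  swap
  · rw [push_snd_of_ne hi, push_fst_of_ne hi]
    exact hab
  rw [push_snd_self, push_fst_self]
  have ha := hX a (mem_leaves_of_inRel h).1
  have hb := hX b (mem_leaves_of_inRel h).2
  by_cases haL : a ∈ L.leaves <;> by_cases hbL : b ∈ L.leaves
  · rw [pushCoord_of_mem_left haL, pushCoord_of_mem_left hbL]
    exact (stretch_strictMono (pushRatioLeft_pos hc hs)).monotone hab
  · calc pushCoord i L R s c a (c.2 a i)
        ≤ c.2 a i :=
          (pushCoord_mem_Icc_of_mem_left hc hs haL ((low_le ha).trans (hc a i).le)).2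
      _ ≤ c.1 b i := hab
      _ ≤ pushCoord i L R s c b (c.1 b i) :=
          (pushCoord_mem_Icc_of_notMem_left hc hs hbL ((hc b i).le.trans (le_high hb))).1
  · exact absurd h (not_inRel_of_le_node hnd hXA ((List.mem_append.1 ha).resolve_left haL) hbL)
  · rw [pushCoord_of_mem_right haL ((List.mem_append.1 ha).resolve_left haL),
      pushCoord_of_mem_right hbL ((List.mem_append.1 hb).resolve_left hbL)]
    exact (stretch_strictMono (pushRatioRight_pos hc hs)).monotone hab

theorem SeparatedBelow.push (h : (node j L R).SeparatedBelow c)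
    (hnd : (node j L R).leaves.Nodup) (hc : IsNondegenerate c) (hs : s ∈ Set.Icc 0 1) :
    (node j L R).SeparatedBelow (push j L R s c) :=
  let ⟨X, hX, hXA, hXc⟩ := h
  ⟨X, hX, hXA, hXc.push hnd hXA (fun _ => hX.mem_iff.1) hc hs⟩

end PushInvariants

theorem continuousOn_push (j : Fin n) (L R : W n k) :
    ContinuousOn (fun p : ℝ × Cfg n k => push j L R p.1 p.2)
      (Set.univ ×ˢ {c | IsNondegenerate c}) := by
  have hσL : ContinuousOn (fun p : ℝ × Cfg n k => pushRatioLeft j L R p.1 p.2)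
      (Set.univ ×ˢ {c | IsNondegenerate c}) := by
    refine ContinuousOn.div (by unfold pushMid; fun_prop) (by fun_prop) ?_
    rintro ⟨s, c⟩ ⟨-, hc⟩
    exact (sub_pos.2 (low_node_lt_high_left hc)).ne'
  have hσR : ContinuousOn (fun p : ℝ × Cfg n k => pushRatioRight j L R p.1 p.2)
      (Set.univ ×ˢ {c | IsNondegenerate c}) := by
    refine ContinuousOn.div (by unfold pushMid; fun_prop) (by fun_prop) ?_
    rintro ⟨s, c⟩ ⟨-, hc⟩
    exact (sub_neg.2 (low_right_lt_high_node hc)).ne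
  refine .prodMk (continuousOn_pi.2 fun a => continuousOn_pi.2 fun i => ?_)
    (continuousOn_pi.2 fun a => continuousOn_pi.2 fun i => ?_) <;>
  · simp only [pushCoord, stretch]
    split_ifs <;> fun_prop

/-- During `[0, 1/2]` the two halves at the root are pushed apart, during `[1/2, 1]` both halves
are deformed recursively. -/
noncomputable def deform : W n k → Cfg n k → ℝ → Cfg n k
  | leaf _, c, _ => c
  | node j L R, c, t =>
    L.glue (L.deform (push j L R (Set.projIcc 0 1 zero_le_one (2 * t)) c) (2 * t - 1))
      (R.deform (push j L R (Set.projIcc 0 1 zero_le_one (2 * t)) c) (2 * t - 1))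

theorem deform_node (j : Fin n) (L R : W n k) (c : Cfg n k) (t : ℝ) :
    (node j L R).deform c t =
      L.glue (L.deform (push j L R (Set.projIcc 0 1 zero_le_one (2 * t)) c) (2 * t - 1))
        (R.deform (push j L R (Set.projIcc 0 1 zero_le_one (2 * t)) c) (2 * t - 1)) := rfl

section Deform

variable {A : W n k} {c : Cfg n k} {t : ℝ}

theorem isNondegenerate_deform (hc : IsNondegenerate c) : IsNondegenerate (A.deform c t) := by
  induction A generalizing c t with
  | leaf _ => exact hc
  | node j L R ihL ihR =>
    have hc' := isNondegenerate_push (j := j) (L := L) (R := R) hc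
      (Set.projIcc (0 : ℝ) 1 zero_le_one (2 * t)).2
    exact isNondegenerate_glue (ihL hc') (ihR hc')

theorem deform_of_nonpos (hc : IsNondegenerate c) (ht : t ≤ 0) : A.deform c t = c := by
  induction A generalizing c t with
  | leaf _ => rfl
  | node j L R ihL ihR =>
    rw [deform_node, Set.projIcc_of_le_left _ (by linarith), push_zero hc,
      ihL hc (by linarith), ihR hc (by linarith), glue_self]

theorem deform_of_separates (hc : IsNondegenerate c) (hsep : A.Separates c) :
    A.deform c t = c := by
  induction A generalizing c t with
  | leaf _ => rfl
  | node j L R ihL ihR =>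
    rw [deform_node, push_of_separates hc hsep (Set.projIcc (0 : ℝ) 1 zero_le_one (2 * t)).2.1,
      ihL hc fun a b i h => hsep a b i (.inl h), ihR hc fun a b i h => hsep a b i (.inr (.inl h)),
      glue_self]

theorem deform_mem_hull (hc : IsNondegenerate c) {a : Fin k} (ha : a ∈ A.leaves) (i : Fin n) :
    A.low c i ≤ (A.deform c t).1 a i ∧ (A.deform c t).2 a i ≤ A.high c i := by
  induction A generalizing c t with
  | leaf _ => exact ⟨low_le ha, le_high ha⟩
  | node j L R ihL ihR =>
    set s := Set.projIcc (0 : ℝ) 1 zero_le_one (2 * t)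
    have hc' := isNondegenerate_push (j := j) (L := L) (R := R) hc s.2
    have hull := fun b hb => push_mem_hull (j := j) (L := L) (R := R) hc s.2 (a := b) hb i
    by_cases haL : a ∈ L.leaves
    · rw [deform_node, glue_fst_of_mem haL, glue_snd_of_mem haL]
      obtain ⟨h₁, h₂⟩ := ihL hc' haL
      exact ⟨(le_low fun b hb => (hull b (List.mem_append_left _ hb)).1).trans h₁,
        h₂.trans (high_le fun b hb => (hull b (List.mem_append_left _ hb)).2)⟩
    · rw [deform_node, glue_fst_of_notMem haL, glue_snd_of_notMem haL]
      obtain ⟨h₁, h₂⟩ := ihR hc' ((List.mem_append.1 ha).resolve_left haL)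
      exact ⟨(le_low fun b hb => (hull b (List.mem_append_right _ hb)).1).trans h₁,
        h₂.trans (high_le fun b hb => (hull b (List.mem_append_right _ hb)).2)⟩

theorem deform_push_one_separated {j : Fin n} {L R : W n k} (hc : IsNondegenerate c)
    (hnd : (node j L R).leaves.Nodup) (t : ℝ) :
    ∀ a ∈ L.leaves, ∀ b ∈ R.leaves,
      (L.deform (push j L R 1 c) t).2 a j ≤ (R.deform (push j L R 1 c) t).1 b j := by
  intro a ha b hb
  have hc' := isNondegenerate_push (j := j) (L := L) (R := R) hc ⟨zero_le_one, le_rfl⟩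
  calc (L.deform (push j L R 1 c) t).2 a j
      ≤ L.high (push j L R 1 c) j := (deform_mem_hull hc' ha j).2
    _ ≤ pushMid j L R c := high_left_push_one_le hc
    _ ≤ R.low (push j L R 1 c) j := pushMid_le_low_right_push_one hc hnd
    _ ≤ (R.deform (push j L R 1 c) t).1 b j := (deform_mem_hull hc' hb j).1

theorem separates_deform (hnd : A.leaves.Nodup) (hc : IsNondegenerate c) (ht : 1 ≤ t) :
    A.Separates (A.deform c t) := by
  induction A generalizing c t with
  | leaf _ => exact fun _ _ _ h => h.elim
  | node j L R ihL ihR =>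
    rw [deform_node, Set.projIcc_of_right_le _ (by linarith)]
    have hc' := isNondegenerate_push (j := j) (L := L) (R := R) hc ⟨zero_le_one, le_rfl⟩
    exact Separates.node_glue (fun _ => id) (fun _ hb haL => notMem_right_of_mem_left hnd haL hb)
      (ihL hnd.of_append_left hc' (by linarith)) (ihR hnd.of_append_right hc' (by linarith))
      (deform_push_one_separated hc hnd _)

theorem SeparatedBelow.deform (hnd : A.leaves.Nodup) (hc : IsNondegenerate c)
    (h : A.SeparatedBelow c) : A.SeparatedBelow (A.deform c t) := by
  induction A generalizing c t with
  | leaf _ => exact h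
  | node j L R ihL ihR =>
    rcases le_or_gt (2 * t) 1 with ht | ht
    · have hs := (Set.projIcc (0 : ℝ) 1 zero_le_one (2 * t)).2
      have hc' := isNondegenerate_push (j := j) (L := L) (R := R) hc hs
      rw [deform_node, deform_of_nonpos hc' (by linarith), deform_of_nonpos hc' (by linarith),
        glue_self]
      exact h.push hnd hc hs
    · rw [deform_node, Set.projIcc_of_right_le _ ht.le]
      have hc' := isNondegenerate_push (j := j) (L := L) (R := R) hc ⟨zero_le_one, le_rfl⟩
      have h' := h.push hnd hc ⟨zero_le_one, le_rfl⟩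
      exact .node_glue hnd (ihL hnd.of_append_left hc' (h'.left hnd))
        (ihR hnd.of_append_right hc' (h'.right hnd)) (deform_push_one_separated hc hnd _)

end Deform

theorem continuousOn_deform (A : W n k) :
    ContinuousOn (fun p : Cfg n k × ℝ => A.deform p.1 p.2)
      ({c | IsNondegenerate c} ×ˢ Set.univ) := by
  induction A with
  | leaf _ => exact continuousOn_fst
  | node j L R ihL ihR =>
    set S := {c : Cfg n k | IsNondegenerate c} ×ˢ (Set.univ : Set ℝ)
    have hpush : ContinuousOn
        (fun p : Cfg n k × ℝ => push j L R (Set.projIcc 0 1 zero_le_one (2 * p.2)) p.1) S := by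
      have h := (continuousOn_push j L R).comp (s := S)
        (f := fun p => ((Set.projIcc (0 : ℝ) 1 zero_le_one (2 * p.2) : ℝ), p.1)) (by fun_prop)
        fun p hp => Set.mk_mem_prod trivial hp.1
      exact h
    have hg := hpush.prodMk (g := fun p => 2 * p.2 - 1) (by fun_prop)
    have hgS : Set.MapsTo (fun p : Cfg n k × ℝ =>
        (push j L R (Set.projIcc 0 1 zero_le_one (2 * p.2)) p.1, 2 * p.2 - 1)) S S :=
      fun p hp => ⟨isNondegenerate_push hp.1 (Set.projIcc (0 : ℝ) 1 zero_le_one _).2, trivial⟩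
    exact (continuous_glue L).comp_continuousOn ((ihL.comp hg hgS).prodMk (ihR.comp hg hgS))

end W

section Configurations

variable {n k : ℕ} {A : W n k} {c : Cfg n k}

theorem InUnitCube.isNondegenerate (hc : InUnitCube c) : IsNondegenerate c :=
  fun a i => (hc a i).2.1

theorem convex_inUnitCube : Convex ℝ {c : Cfg n k | InUnitCube c} := by
  intro x hx y hy μ ν hμ hν hμν a i
  simp only [Prod.fst_add, Prod.snd_add, Prod.smul_fst, Prod.smul_snd, Pi.add_apply,
    Pi.smul_apply, smul_eq_mul]
  obtain ⟨hx₀, hx, hx₁⟩ := hx a i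
  obtain ⟨hy₀, hy, hy₁⟩ := hy a i
  refine ⟨by positivity, ?_, by nlinarith⟩
  rcases hμ.eq_or_lt with rfl | hμ
  · rw [zero_add] at hμν
    simpa [hμν] using hy
  · exact add_lt_add_of_lt_of_le (mul_lt_mul_of_pos_left hx hμ)
      (mul_le_mul_of_nonneg_left hy.le hν)

theorem W.convex_separates (X : W n k) : Convex ℝ {c : Cfg n k | X.Separates c} := by
  intro x hx y hy μ ν hμ hν _ a b i h
  simp only [Prod.fst_add, Prod.snd_add, Prod.smul_fst, Prod.smul_snd, Pi.add_apply,
    Pi.smul_apply, smul_eq_mul]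
  exact add_le_add (mul_le_mul_of_nonneg_left (hx a b i h) hμ)
    (mul_le_mul_of_nonneg_left (hy a b i h) hν)

theorem disjoint_cubeInterior_of_le {a b : Fin k} {i : Fin n} (h : c.2 a i ≤ c.1 b i) :
    Disjoint (cubeInterior n k c a) (cubeInterior n k c b) :=
  Set.disjoint_left.2 fun _ hxa hxb =>
    ((Set.mem_univ_pi.1 hxa i).2.trans_le h).not_gt (Set.mem_univ_pi.1 hxb i).1

theorem isConfig_of_separates {X : W n k} (hX : ∀ a, a ∈ X.leaves) (hc : InUnitCube c)
    (hXc : X.Separates c) : IsConfig n k c := by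
  refine ⟨hc, fun a b hab => ?_⟩
  obtain ⟨i, h | h⟩ := W.exists_inRel_or_inRel (hX a) (hX b) hab
  · exact disjoint_cubeInterior_of_le (hXc a b i h)
  · exact (disjoint_cubeInterior_of_le (hXc b a i h)).symm

theorem W.Exact.mem_of_univ {X : W n k} (hX : X.Exact Finset.univ) (a : Fin k) :
    a ∈ X.leaves :=
  List.mem_toFinset.1 (hX.2 ▸ Finset.mem_univ a)

theorem mem_Gset_iff (hA : A.Exact Finset.univ) :
    c ∈ Gset n k A ↔ InUnitCube c ∧ A.Separates c :=
  ⟨fun h => ⟨h.1.1, h.2⟩, fun h => ⟨isConfig_of_separates hA.mem_of_univ h.1 h.2, h.2⟩⟩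

theorem mem_Fset_iff (hA : A.Exact Finset.univ) :
    c ∈ Fset n k A ↔ InUnitCube c ∧ A.SeparatedBelow c := by
  simp only [Fset, Set.mem_iUnion, exists_prop, W.SeparatedBelow, hA.2]
  constructor
  · rintro ⟨X, ⟨hX, hXA⟩, hc⟩
    exact ⟨hc.1.1, X, hX, hXA, hc.2⟩
  · rintro ⟨hc, X, hX, hXA, hXc⟩
    exact ⟨X, ⟨hX, hXA⟩, (mem_Gset_iff hX).2 ⟨hc, hXc⟩⟩

theorem Gset_subset_Fset (hA : A.Exact Finset.univ) : Gset n k A ⊆ Fset n k A :=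
  Set.subset_iUnion₂ (s := fun X (_ : X.Exact Finset.univ ∧ X.le A) => Gset n k X) A
    ⟨hA, A.le_refl⟩

theorem convex_Gset (hA : A.Exact Finset.univ) : Convex ℝ (Gset n k A) := by
  have : Gset n k A = {c | InUnitCube c} ∩ {c | A.Separates c} := Set.ext fun _ => mem_Gset_iff hA
  exact this ▸ convex_inUnitCube.inter A.convex_separates

theorem InUnitCube.deform (hA : ∀ a, a ∈ A.leaves) (hc : InUnitCube c) (t : ℝ) :
    InUnitCube (A.deform c t) := fun a i =>
  have hull := W.deform_mem_hull (t := t) hc.isNondegenerate (hA a) i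
  ⟨(W.le_low fun b _ => (hc b i).1).trans hull.1,
    W.isNondegenerate_deform hc.isNondegenerate a i,
    hull.2.trans (W.high_le fun b _ => (hc b i).2.2)⟩

theorem deform_mem_Fset (hA : A.Exact Finset.univ) (hc : c ∈ Fset n k A) (t : ℝ) :
    A.deform c t ∈ Fset n k A := by
  rw [mem_Fset_iff hA] at hc ⊢
  exact ⟨hc.1.deform hA.mem_of_univ t, hc.2.deform hA.1 hc.1.isNondegenerate⟩

theorem deform_one_mem_Gset (hA : A.Exact Finset.univ) (hc : InUnitCube c) :
    A.deform c 1 ∈ Gset n k A :=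
  (mem_Gset_iff hA).2 ⟨hc.deform hA.mem_of_univ 1,
    W.separates_deform hA.1 hc.isNondegenerate le_rfl⟩

theorem deform_of_mem_Gset (hA : A.Exact Finset.univ) (hc : c ∈ Gset n k A) (t : ℝ) :
    A.deform c t = c :=
  W.deform_of_separates ((mem_Gset_iff hA).1 hc).1.isNondegenerate hc.2

theorem Gset_nonempty (hA : A.Exact Finset.univ) : (Gset n k A).Nonempty :=
  ⟨_, deform_one_mem_Gset hA (c := (0, 1)) fun _ _ => by norm_num⟩

end Configurations

section Retraction

variable {n k : ℕ} {A : W n k}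

theorem continuous_deform_Fset (hA : A.Exact Finset.univ) :
    Continuous fun p : unitInterval × Fset n k A => A.deform p.2 p.1 :=
  A.continuousOn_deform.comp_continuous
    (f := fun p : unitInterval × Fset n k A => ((p.2 : Cfg n k), (p.1 : ℝ))) (by fun_prop)
    fun p => ⟨((mem_Fset_iff hA).1 p.2.2).1.isNondegenerate, trivial⟩

noncomputable def deformFset (hA : A.Exact Finset.univ) :
    C(unitInterval × Fset n k A, Fset n k A) :=
  ⟨fun p => ⟨A.deform p.2 p.1, deform_mem_Fset hA p.2.2 p.1⟩,
    (continuous_deform_Fset hA).subtype_mk _⟩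

noncomputable def retractionFset (hA : A.Exact Finset.univ) : C(Fset n k A, Fset n k A) :=
  (deformFset hA).curry 1

theorem retractionFset_mem_Gset (hA : A.Exact Finset.univ) (x : Fset n k A) :
    (retractionFset hA x : Cfg n k) ∈ Gset n k A :=
  deform_one_mem_Gset hA ((mem_Fset_iff hA).1 x.2).1

noncomputable def deformHomotopyRel (hA : A.Exact Finset.univ) :
    (ContinuousMap.id (Fset n k A)).HomotopyRel (retractionFset hA)
      {x | (x : Cfg n k) ∈ Gset n k A} where
  toContinuousMap := deformFset hA
  map_zero_left x :=
    Subtype.ext (W.deform_of_nonpos ((mem_Fset_iff hA).1 x.2).1.isNondegenerate le_rfl)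
  map_one_left _ := rfl
  prop' _ _ hx := Subtype.ext (deform_of_mem_Gset hA hx _)

end Retraction

theorem Gset_strong_deformation_retract_of_Fset_general (n k : ℕ) (A : W n k) (hA : A.Exact Finset.univ) :
    (∃ r : C(↥(Fset n k A), ↥(Fset n k A)),
      (∀ x : ↥(Fset n k A),
        (r x : (Fin k → Fin n → ℝ) × (Fin k → Fin n → ℝ)) ∈ Gset n k A) ∧
      (∀ x : ↥(Fset n k A),
        (x : (Fin k → Fin n → ℝ) × (Fin k → Fin n → ℝ)) ∈ Gset n k A → r x = x) ∧
      Nonempty ((ContinuousMap.id ↥(Fset n k A)).HomotopyRel r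
        {x : ↥(Fset n k A) |
          (x : (Fin k → Fin n → ℝ) × (Fin k → Fin n → ℝ)) ∈ Gset n k A})) ∧
    ContractibleSpace ↥(Fset n k A) := by
  refine ⟨⟨retractionFset hA, retractionFset_mem_Gset hA,
    fun x hx => Subtype.ext (deform_of_mem_Gset hA hx 1), ⟨deformHomotopyRel hA⟩⟩, ?_⟩
  have := (convex_Gset hA).contractibleSpace (Gset_nonempty hA)
  let toGset : C(Fset n k A, Gset n k A) :=
    ⟨fun x => ⟨retractionFset hA x, retractionFset_mem_Gset hA x⟩,
      (retractionFset hA).continuous.subtype_val.subtype_mk _⟩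
  exact .of_homotopic_id_comp toGset ⟨_, continuous_inclusion (Gset_subset_Fset hA)⟩
    ⟨(deformHomotopyRel hA).toHomotopy⟩

/-- STATEMENT 11: `G(A)` is a strong deformation retract of `F(A)`; in particular
`F(A)` is contractible. -/
theorem Gset_strong_deformation_retract_of_Fset (n k : ℕ) (hn : 1 ≤ n) (hk : 1 ≤ k)
    (A : W n k) (hA : A.Exact Finset.univ) :
    (∃ r : C(↥(Fset n k A), ↥(Fset n k A)),
      (∀ x : ↥(Fset n k A),
        (r x : (Fin k → Fin n → ℝ) × (Fin k → Fin n → ℝ)) ∈ Gset n k A) ∧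
      (∀ x : ↥(Fset n k A),
        (x : (Fin k → Fin n → ℝ) × (Fin k → Fin n → ℝ)) ∈ Gset n k A → r x = x) ∧
      Nonempty ((ContinuousMap.id ↥(Fset n k A)).HomotopyRel r
        {x : ↥(Fset n k A) |
          (x : (Fin k → Fin n → ℝ) × (Fin k → Fin n → ℝ)) ∈ Gset n k A})) ∧
    ContractibleSpace ↥(Fset n k A) :=
  Gset_strong_deformation_retract_of_Fset_general n k A hA
end

section
/- Let X be an (n,S)-expression and suppose S = S₁ ⊔ S₂ is a partition into two nonempty sets such that for some fixed i, x□ᵢy in X for every x ∈ S₁ and y ∈ S₂. Then X decomposes as X = (X∩S₁) □ᵢ (X∩S₂); that is, X equals the expression obtained by joining its restrictions to S₁ and to S₂ by the operation □ᵢ. -/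
namespace W

variable {n k : ℕ}

theorem leaves_ne_nil (A : W n k) : A.leaves ≠ [] := by
  cases A <;> simp [leaves, leaves_ne_nil]

section inRel_node

variable {j i : Fin n} {A B : W n k} {a b : Fin k}

theorem inRel_left_of_inRel_node_s10 (hAB : A.leaves.Disjoint B.leaves) (hb : b ∈ A.leaves)
    (h : (node j A B).inRel a b i) : A.inRel a b i := by
  rcases h with h | h | ⟨_, _, hb'⟩
  · exact h
  · exact absurd (mem_leaves_of_inRel h).2 (hAB hb)
  · exact absurd hb' (hAB hb)

theorem inRel_right_of_inRel_node_s10 (hAB : A.leaves.Disjoint B.leaves) (ha : a ∈ B.leaves)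
    (h : (node j A B).inRel a b i) : B.inRel a b i := by
  rcases h with h | h | ⟨_, ha', _⟩
  · exact absurd ha (hAB (mem_leaves_of_inRel h).1)
  · exact h
  · exact absurd ha (hAB ha')

theorem eq_of_inRel_node (hAB : A.leaves.Disjoint B.leaves) (ha : a ∈ A.leaves)
    (hb : b ∈ B.leaves) (h : (node j A B).inRel a b i) : j = i := by
  rcases h with h | h | ⟨hji, _, _⟩
  · exact absurd hb (hAB (mem_leaves_of_inRel h).2)
  · exact absurd (mem_leaves_of_inRel h).1 (hAB ha)
  · exact hji

theorem not_inRel_node (hAB : A.leaves.Disjoint B.leaves) (ha : a ∈ B.leaves)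
    (hb : b ∈ A.leaves) : ¬(node j A B).inRel a b i :=
  fun h => hAB (mem_leaves_of_inRel (inRel_left_of_inRel_node_s10 hAB hb h)).1 ha

end inRel_node

theorem restrict_congr {A : W n k} {p q : Fin k → Bool}
    (h : ∀ a ∈ A.leaves, p a = q a) : A.restrict p = A.restrict q := by
  induction A with
  | leaf a => simp [restrict, h a (by simp [leaves])]
  | node i A B ihA ihB =>
    rw [restrict_node, restrict_node, ihA fun a ha => h a (by simp [leaves, ha]),
      ihB fun a ha => h a (by simp [leaves, ha])]

theorem restrict_eq_some_self {A : W n k} {p : Fin k → Bool}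
    (h : ∀ a ∈ A.leaves, p a = true) : A.restrict p = some A := by
  induction A with
  | leaf a => simp [restrict, h a (by simp [leaves])]
  | node i A B ihA ihB =>
    rw [restrict_node, ihA fun a ha => h a (by simp [leaves, ha]),
      ihB fun a ha => h a (by simp [leaves, ha]), onode]

theorem restrict_eq_none {A : W n k} {p : Fin k → Bool}
    (h : ∀ a ∈ A.leaves, p a = false) : A.restrict p = none := by
  induction A with
  | leaf a => simp [restrict, h a (by simp [leaves])]
  | node i A B ihA ihB =>
    rw [restrict_node, ihA fun a ha => h a (by simp [leaves, ha]),
      ihB fun a ha => h a (by simp [leaves, ha]), onode]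

theorem equiv.trans {A B C : W n k} (h₁ : A.equiv B) (h₂ : B.equiv C) : A.equiv C :=
  Relation.EqvGen.trans _ _ _ h₁ h₂

theorem equiv.symm {A B : W n k} (h : A.equiv B) : B.equiv A :=
  Relation.EqvGen.symm _ _ h

theorem equiv_assoc (i : Fin n) (A B C : W n k) :
    (node i (node i A B) C).equiv (node i A (node i B C)) :=
  .rel _ _ (.assoc i A B C)

theorem equiv.node_left (i : Fin n) {A A' : W n k} (B : W n k)
    (h : A.equiv A') : (node i A B).equiv (node i A' B) := by
  induction h with
  | rel _ _ h => exact .rel _ _ (.congr_left i B h)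
  | refl => exact .refl _
  | symm _ _ _ ih => exact ih.symm
  | trans _ _ _ _ _ ih₁ ih₂ => exact ih₁.trans ih₂

theorem equiv.node_right (i : Fin n) (A : W n k) {B B' : W n k}
    (h : B.equiv B') : (node i A B).equiv (node i A B') := by
  induction h with
  | rel _ _ h => exact .rel _ _ (.congr_right i A h)
  | refl => exact .refl _
  | symm _ _ _ ih => exact ih.symm
  | trans _ _ _ _ _ ih₁ ih₂ => exact ih₁.trans ih₂

/-- In `node j A B`, no `p`-leaf of `B` can precede a `!p`-leaf of `A`, so one of `A`, `B`
lies on a single side and the other is split by induction; reassociating then exhibits the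
decomposition. -/
theorem exists_restrict_eq_some_equiv_node (p : Fin k → Bool) (i : Fin n) (X : W n k)
    (hnd : X.leaves.Nodup) (hp : ∃ x ∈ X.leaves, p x) (hnp : ∃ y ∈ X.leaves, p y = false)
    (hsep : ∀ x ∈ X.leaves, ∀ y ∈ X.leaves, p x → p y = false → X.inRel x y i) :
    ∃ X₁ X₂ : W n k, X.restrict p = some X₁ ∧ X.restrict (fun a => !p a) = some X₂ ∧
      X.equiv (node i X₁ X₂) := by
  induction X with
  | leaf a =>
    obtain ⟨x, hx, hpx⟩ := hp
    obtain ⟨y, hy, hpy⟩ := hnp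
    simp only [leaves, List.mem_singleton] at hx hy
    simp_all
  | node j A B ihA ihB =>
    obtain ⟨hndA, hndB, hAB⟩ := List.nodup_append'.mp hnd
    simp only [leaves, List.mem_append] at hp hnp hsep
    have hsepA : ∀ x ∈ A.leaves, ∀ y ∈ A.leaves, p x → p y = false → A.inRel x y i :=
      fun x hx y hy hpx hpy =>
        inRel_left_of_inRel_node_s10 hAB hy (hsep x (.inl hx) y (.inl hy) hpx hpy)
    have hsepB : ∀ x ∈ B.leaves, ∀ y ∈ B.leaves, p x → p y = false → B.inRel x y i :=
      fun x hx y hy hpx hpy =>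
        inRel_right_of_inRel_node_s10 hAB hx (hsep x (.inr hx) y (.inr hy) hpx hpy)
    have hji : ∀ x ∈ A.leaves, ∀ y ∈ B.leaves, p x → p y = false → j = i :=
      fun x hx y hy hpx hpy => eq_of_inRel_node hAB hx hy (hsep x (.inl hx) y (.inr hy) hpx hpy)
    have hside : (∀ b ∈ B.leaves, p b = false) ∨ ∀ a ∈ A.leaves, p a := by
      by_contra! ⟨⟨x, hxB, hpx⟩, y, hyA, hpy⟩
      exact not_inRel_node hAB hxB hyA
        (hsep x (.inr hxB) y (.inl hyA) (by simpa using hpx) (by simpa using hpy))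
    by_cases hB : ∀ b ∈ B.leaves, p b = false
    · obtain ⟨x, hxA, hpx⟩ : ∃ x ∈ A.leaves, p x := by
        obtain ⟨x, hx | hx, hpx⟩ := hp
        exacts [⟨x, hx, hpx⟩, absurd (hB x hx) (by simp [hpx])]
      obtain ⟨b, hb⟩ := List.exists_mem_of_ne_nil _ B.leaves_ne_nil
      obtain rfl := hji x hxA b hb hpx (hB b hb)
      have hB' : ∀ b ∈ B.leaves, (!p b) = true := by simpa using hB
      by_cases hA : ∀ a ∈ A.leaves, p a
      · have hA' : ∀ a ∈ A.leaves, (!p a) = false := by simpa using hA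
        refine ⟨A, B, ?_, ?_, .refl _⟩
        · rw [restrict_node, restrict_eq_some_self hA, restrict_eq_none hB]; rfl
        · rw [restrict_node, restrict_eq_none hA', restrict_eq_some_self hB']; rfl
      · obtain ⟨y, hyA, hpy⟩ : ∃ y ∈ A.leaves, p y = false := by simpa using hA
        obtain ⟨A₁, A₂, h₁, h₂, hA⟩ :=
          ihA hndA ⟨x, hxA, hpx⟩ ⟨y, hyA, hpy⟩ hsepA
        refine ⟨A₁, node j A₂ B, ?_, ?_, (hA.node_left j B).trans (equiv_assoc ..)⟩
        · rw [restrict_node, h₁, restrict_eq_none hB]; rfl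
        · rw [restrict_node, h₂, restrict_eq_some_self hB']; rfl
    · obtain ⟨x, hxB, hpx⟩ : ∃ x ∈ B.leaves, p x := by simpa using hB
      have hA := hside.resolve_left hB
      have hA' : ∀ a ∈ A.leaves, (!p a) = false := by simpa using hA
      obtain ⟨y, hyB, hpy⟩ : ∃ y ∈ B.leaves, p y = false := by
        obtain ⟨y, hy | hy, hpy⟩ := hnp
        exacts [absurd (hA y hy) (by simp [hpy]), ⟨y, hy, hpy⟩]
      obtain ⟨a, ha⟩ := List.exists_mem_of_ne_nil _ A.leaves_ne_nil
      obtain rfl := hji a ha y hyB (hA a ha) hpy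
      obtain ⟨B₁, B₂, h₁, h₂, hB⟩ := ihB hndB ⟨x, hxB, hpx⟩ ⟨y, hyB, hpy⟩ hsepB
      refine ⟨node j A B₁, B₂, ?_, ?_, (hB.node_right j A).trans (equiv_assoc ..).symm⟩
      · rw [restrict_node, restrict_eq_some_self hA, h₁]; rfl
      · rw [restrict_node, restrict_eq_none hA', h₂]; rfl

end W

theorem expression_decomposition_general (n k : ℕ) (X : W n k)
    (S S₁ S₂ : Finset (Fin k)) (hX : X.Exact S)
    (h₁ : S₁.Nonempty) (h₂ : S₂.Nonempty) (hd : Disjoint S₁ S₂) (hu : S₁ ∪ S₂ = S)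
    (i : Fin n) (hsep : ∀ x ∈ S₁, ∀ y ∈ S₂, X.inRel x y i) :
    ∃ X₁ X₂ : W n k,
      X.restrict (fun a => decide (a ∈ S₁)) = some X₁ ∧
      X.restrict (fun a => decide (a ∈ S₂)) = some X₂ ∧
      X.equiv (W.node i X₁ X₂) := by
  obtain ⟨hnd, hS⟩ := hX
  have hmem : ∀ a, a ∈ X.leaves ↔ a ∈ S₁ ∨ a ∈ S₂ := by
    simp [← Finset.mem_union, hu, ← hS]
  have hS₂ : ∀ a ∈ X.leaves, a ∈ S₂ ↔ a ∉ S₁ := fun a ha =>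
    ⟨fun h => Finset.disjoint_right.mp hd h, ((hmem a).mp ha).resolve_left⟩
  have hrestrict :
      X.restrict (fun a => decide (a ∈ S₂)) = X.restrict (fun a => !decide (a ∈ S₁)) :=
    W.restrict_congr fun a ha => by simp [hS₂ a ha]
  obtain ⟨x, hx⟩ := h₁
  obtain ⟨y, hy⟩ := h₂
  rw [hrestrict]
  refine W.exists_restrict_eq_some_equiv_node (fun a => decide (a ∈ S₁)) i X hnd
    ⟨x, (hmem x).mpr (.inl hx), by simpa⟩
    ⟨y, (hmem y).mpr (.inr hy), by simpa using Finset.disjoint_right.mp hd hy⟩ ?_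
  intro x hx y hy hpx hpy
  exact hsep x (by simpa using hpx) y ((hS₂ y hy).mpr (by simpa using hpy))

/-- STATEMENT 13: if `S = S₁ ⊔ S₂` with both parts nonempty and `x □ᵢ y` in `X` for
every `x ∈ S₁`, `y ∈ S₂`, then `X` decomposes as `X = (X∩S₁) □ᵢ (X∩S₂)`. -/
theorem expression_decomposition (n k : ℕ) (hn : 1 ≤ n) (X : W n k)
    (S S₁ S₂ : Finset (Fin k)) (hX : X.Exact S)
    (h₁ : S₁.Nonempty) (h₂ : S₂.Nonempty) (hd : Disjoint S₁ S₂) (hu : S₁ ∪ S₂ = S)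
    (i : Fin n) (hsep : ∀ x ∈ S₁, ∀ y ∈ S₂, X.inRel x y i) :
    ∃ X₁ X₂ : W n k,
      X.restrict (fun a => decide (a ∈ S₁)) = some X₁ ∧
      X.restrict (fun a => decide (a ∈ S₂)) = some X₂ ∧
      X.equiv (W.node i X₁ X₂) :=
  expression_decomposition_general n k X S S₁ S₂ hX h₁ h₂ hd hu i hsep
end
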